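/- Let β > 0 and x* ∈ Λ_A^β. Then: (a) for every nonnegative integer n < β there is a constant C_n (independent of x* and t) such that ‖(d/dt)^n T_t* x*‖_{X*} ≤ C_n ‖x*‖_{Λ_A^β} for all t > 0; (b) ‖x* − T_t* x*‖_{X*} → 0 as t → 0+. -/

import Mathlib

/-!
Let `m` be the smallest integer `> β`, so that membership in `Λ_A^β` bounds the `m`-th derivative
of the dual orbit by `‖x*‖_Λ t^(β-m)`. Fix `γ` with `k < γ < min β (k + 1)`. Integrating downwards
from `t = 1`, where every derivative is controlled by `‖x*‖` through the semigroup estimates, gives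
`‖(d/dt)^n T_t* x*‖ ≲ ‖x*‖_Λ t^(min (γ - n) 0)` on `(0, 1]` for `k ≤ n ≤ m`; taking `γ` non-integral
avoids the logarithms that integrating `u^(-1)` would produce. At `n = k` this is boundedness near
`0`, and for `t ≥ 1` the bound `‖A^k T_t‖ ≤ C^k` suffices.

For `k = 0` the estimate at `n = 1` makes the dual orbit Hölder continuous of order `γ` on `(0, 1]`.
Since `T_s* x* → x*` only weak-* as `s → 0`, the bound `‖x* - T_t* x*‖ ≲ t^γ` is obtained from the
lower semicontinuity of the dual norm under weak-* limits.
-/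

open Filter Topology MeasureTheory Set

noncomputable section

variable {X : Type*} [NormedAddCommGroup X] [NormedSpace ℂ X] [CompleteSpace X]

/-- The `n`-th derivative on `(0,∞)` of the orbit `t ↦ x* ∘ T t` of the dual semigroup. -/
def dualDeriv (T : ℝ → X →L[ℂ] X) (n : ℕ) (xs : X →L[ℂ] ℂ) (t : ℝ) : X →L[ℂ] ℂ :=
  iteratedDerivWithin n (fun s => xs.comp (T s)) (Set.Ioi 0) t

/-- A uniformly bounded, strongly continuous holomorphic semigroup on `(0,∞)`,
together with the standard properties of its time derivatives. -/
structure IsHoloSG (T : ℝ → X →L[ℂ] X) : Prop where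
  semigroup : ∀ s t : ℝ, 0 < s → 0 < t → T (s + t) = (T s).comp (T t)
  strong : ∀ x : X, Tendsto (fun t => T t x) (𝓝[>] (0:ℝ)) (𝓝 x)
  bounded : ∃ M : ℝ, ∀ t : ℝ, 0 < t → ‖T t‖ ≤ M
  smooth : ContDiffOn ℝ (⊤ : ℕ∞) T (Set.Ioi 0)
  derivComp : ∀ n : ℕ, ∀ s t : ℝ, 0 < s → 0 < t →
    iteratedDerivWithin n T (Set.Ioi 0) (t + s)
      = (iteratedDerivWithin n T (Set.Ioi 0) t).comp (T s)
  derivBound : ∃ C : ℝ, 0 < C ∧ ∀ n : ℕ, 1 ≤ n → ∀ t : ℝ, 0 < t →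
    ‖iteratedDerivWithin n T (Set.Ioi 0) t‖ ≤ C ^ n / t ^ n

/-- The smallest integer `> β` (for `β > 0`). -/
def mExp (β : ℝ) : ℕ := ⌊β⌋₊ + 1

/-- Membership in the Lipschitz space `Λ_A^β`. -/
def MemLambda (T : ℝ → X →L[ℂ] X) (β : ℝ) (xs : X →L[ℂ] ℂ) : Prop :=
  ∃ C : ℝ, ∀ t : ℝ, 0 < t →
    ‖dualDeriv T (mExp β) xs t‖ ≤ C * t ^ (β - (mExp β : ℝ))

/-- The norm of the Lipschitz space `Λ_A^β`. -/
def lambdaNorm (T : ℝ → X →L[ℂ] X) (β : ℝ) (xs : X →L[ℂ] ℂ) : ℝ :=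
  ‖xs‖ + ⨆ t : Set.Ioi (0:ℝ),
    (t : ℝ) ^ ((mExp β : ℝ) - β) * ‖dualDeriv T (mExp β) xs t‖

theorem norm_sub_le_of_norm_deriv_le_rpow {E : Type*} [NormedAddCommGroup E] [NormedSpace ℝ E]
    [CompleteSpace E] {f f' : ℝ → E} {K γ s t : ℝ} (hγ : γ ≠ 0) (hs : 0 < s) (hst : s ≤ t)
    (hf : ∀ u ∈ Icc s t, HasDerivAt f (f' u) u) (hf' : IntervalIntegrable f' volume s t)
    (hbound : ∀ u ∈ Ioc s t, ‖f' u‖ ≤ K * u ^ (γ - 1)) :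
    ‖f t - f s‖ ≤ K * ((t ^ γ - s ^ γ) / γ) := by
  have hzero : (0 : ℝ) ∉ uIcc s t := by
    rw [uIcc_of_le hst]; exact fun h => hs.not_ge h.1
  have hcont : ContinuousOn (fun u : ℝ => K * u ^ (γ - 1)) (uIcc s t) := fun u hu =>
    (continuousAt_const.mul (Real.continuousAt_rpow_const u _
      (Or.inl (ne_of_mem_of_not_mem hu hzero)))).continuousWithinAt
  calc ‖f t - f s‖ = ‖∫ u in s..t, f' u‖ := by
        rw [intervalIntegral.integral_eq_sub_of_hasDerivAt (by rwa [uIcc_of_le hst]) hf']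
    _ ≤ ∫ u in s..t, K * u ^ (γ - 1) :=
        intervalIntegral.norm_integral_le_of_norm_le hst (ae_of_all _ hbound)
          hcont.intervalIntegrable
    _ = K * ((t ^ γ - s ^ γ) / γ) := by
        rw [intervalIntegral.integral_const_mul,
          integral_rpow (Or.inr ⟨by rwa [Ne, sub_eq_neg_self], hzero⟩), sub_add_cancel]

theorem one_sub_rpow_div_le {γ t : ℝ} (hγ : γ ≠ 0) (ht : 0 < t) :
    (1 - t ^ γ) / γ ≤ t ^ min γ 0 / |γ| := by
  have htγ : 0 < t ^ γ := Real.rpow_pos_of_pos ht γ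
  rcases hγ.lt_or_gt with hneg | hpos
  · rw [min_eq_left hneg.le, abs_of_neg hneg, ← neg_div_neg_eq, neg_sub]
    exact div_le_div_of_nonneg_right (by linarith) (by linarith)
  · rw [min_eq_right hpos.le, Real.rpow_zero, abs_of_pos hpos]
    gcongr
    linarith

theorem ContDiffOn.hasDerivAt_iteratedDerivWithin {𝕜 F : Type*} [NontriviallyNormedField 𝕜]
    [NormedAddCommGroup F] [NormedSpace 𝕜 F] {f : 𝕜 → F} {s : Set 𝕜} {N : WithTop ℕ∞} {n : ℕ}
    {x : 𝕜} (hf : ContDiffOn 𝕜 N f s) (hn : (n : WithTop ℕ∞) < N) (hs : IsOpen s) (hx : x ∈ s) :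
    HasDerivAt (iteratedDerivWithin n f s) (iteratedDerivWithin (n + 1) f s x) x := by
  rw [iteratedDerivWithin_succ, derivWithin_of_isOpen hs hx]
  exact ((hf.differentiableOn_iteratedDerivWithin hn hs.uniqueDiffOn x hx).differentiableAt
    (hs.mem_nhds hx)).hasDerivAt

theorem ContinuousLinearMap.iteratedDerivWithin_comp_left {𝕜 F G : Type*}
    [NontriviallyNormedField 𝕜] [NormedAddCommGroup F] [NormedSpace 𝕜 F] [NormedAddCommGroup G]
    [NormedSpace 𝕜 G] {f : 𝕜 → F} {s : Set 𝕜} {N : WithTop ℕ∞} {n : ℕ} {x : 𝕜} (g : F →L[𝕜] G)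
    (hf : ContDiffWithinAt 𝕜 N f s x) (hs : UniqueDiffOn 𝕜 s) (hx : x ∈ s)
    (hn : (n : WithTop ℕ∞) ≤ N) :
    iteratedDerivWithin n (g ∘ f) s x = g (iteratedDerivWithin n f s x) := by
  simp [iteratedDerivWithin_eq_iteratedFDerivWithin, g.iteratedFDerivWithin_comp_left hf hs hx hn]

theorem ContinuousLinearMap.opNorm_le_of_tendsto_apply {𝕜 E F ι : Type*}
    [NontriviallyNormedField 𝕜] [NormedAddCommGroup E] [NormedSpace 𝕜 E] [NormedAddCommGroup F]
    [NormedSpace 𝕜 F]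
    {l : Filter ι} [l.NeBot] {φ : ι → E →L[𝕜] F} {ψ : E →L[𝕜] F} {K : ℝ} (hK : 0 ≤ K)
    (hφ : ∀ x, Tendsto (fun i => φ i x) l (𝓝 (ψ x))) (hb : ∀ᶠ i in l, ‖φ i‖ ≤ K) : ‖ψ‖ ≤ K :=
  ψ.opNorm_le_bound hK fun x => le_of_tendsto (hφ x).norm <| hb.mono fun i hi =>
    ((φ i).le_opNorm x).trans (mul_le_mul_of_nonneg_right hi (norm_nonneg x))

section Orbit

variable {E : Type*} [NormedAddCommGroup E] [NormedSpace ℂ E] {T : ℝ → E →L[ℂ] E}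
  (hT : ContDiffOn ℝ (⊤ : ℕ∞) T (Ioi 0)) (xs : E →L[ℂ] ℂ)
include hT

theorem contDiffOn_dualOrbit : ContDiffOn ℝ (⊤ : ℕ∞) (fun s => xs.comp (T s)) (Ioi 0) :=
  ((ContinuousLinearMap.compL ℂ E E ℂ xs).restrictScalars ℝ).contDiff.comp_contDiffOn hT

theorem dualDeriv_eq_comp (n : ℕ) {t : ℝ} (ht : 0 < t) :
    dualDeriv T n xs t = xs.comp (iteratedDerivWithin n T (Ioi 0) t) :=
  ((ContinuousLinearMap.compL ℂ E E ℂ xs).restrictScalars ℝ).iteratedDerivWithin_comp_left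
    (hT t ht) (uniqueDiffOn_Ioi 0) ht (by exact_mod_cast le_top)

theorem hasDerivAt_dualDeriv (n : ℕ) {t : ℝ} (ht : 0 < t) :
    HasDerivAt (dualDeriv T n xs) (dualDeriv T (n + 1) xs t) t :=
  (contDiffOn_dualOrbit hT xs).hasDerivAt_iteratedDerivWithin
    (by exact_mod_cast ENat.natCast_lt_top n) isOpen_Ioi ht

theorem continuousOn_dualDeriv (n : ℕ) : ContinuousOn (dualDeriv T n xs) (Ioi 0) :=
  (contDiffOn_dualOrbit hT xs).continuousOn_iteratedDerivWithin (by exact_mod_cast le_top)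
    (uniqueDiffOn_Ioi 0)

theorem norm_dualDeriv_le (n : ℕ) {t : ℝ} (ht : 0 < t) :
    ‖dualDeriv T n xs t‖ ≤ ‖xs‖ * ‖iteratedDerivWithin n T (Ioi 0) t‖ := by
  rw [dualDeriv_eq_comp hT xs n ht]
  exact xs.opNorm_comp_le _

end Orbit

section LambdaNorm

variable {E : Type*} [NormedAddCommGroup E] [NormedSpace ℂ E] {T : ℝ → E →L[ℂ] E} {β : ℝ}
  {xs : E →L[ℂ] ℂ}

theorem lt_mExp (β : ℝ) : β < mExp β := by
  simpa [mExp] using Nat.lt_floor_add_one β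

theorem norm_le_lambdaNorm : ‖xs‖ ≤ lambdaNorm T β xs :=
  le_add_of_nonneg_right <| Real.iSup_nonneg fun t => by have : (0 : ℝ) < t := t.2; positivity

theorem MemLambda.norm_dualDeriv_mExp_le (hxs : MemLambda T β xs) {t : ℝ} (ht : 0 < t) :
    ‖dualDeriv T (mExp β) xs t‖ ≤ lambdaNorm T β xs * t ^ (β - mExp β) := by
  obtain ⟨c, hc⟩ := hxs
  set g : Ioi (0 : ℝ) → ℝ := fun u => (u : ℝ) ^ ((mExp β : ℝ) - β) * ‖dualDeriv T (mExp β) xs u‖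
  have hg : BddAbove (range g) := by
    refine ⟨c, ?_⟩
    rintro _ ⟨⟨u, hu : 0 < u⟩, rfl⟩
    calc g ⟨u, hu⟩ ≤ u ^ ((mExp β : ℝ) - β) * (c * u ^ (β - mExp β)) :=
          mul_le_mul_of_nonneg_left (hc u hu) (by positivity)
      _ = c := by rw [mul_left_comm, ← Real.rpow_add hu]; simp
  calc ‖dualDeriv T (mExp β) xs t‖ = t ^ (β - mExp β) * g ⟨t, ht⟩ := by
        rw [← mul_assoc, ← Real.rpow_add ht]; simp
    _ ≤ t ^ (β - mExp β) * lambdaNorm T β xs :=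
        mul_le_mul_of_nonneg_left ((le_ciSup hg _).trans (le_add_of_nonneg_left (norm_nonneg _)))
          (by positivity)
    _ = lambdaNorm T β xs * t ^ (β - mExp β) := mul_comm _ _

end LambdaNorm

namespace IsHoloSG

variable {E : Type*} [NormedAddCommGroup E] [NormedSpace ℂ E] {T : ℝ → E →L[ℂ] E}
  (hT : IsHoloSG T)
include hT

theorem exists_norm_dualDeriv_le_of_one_le (β : ℝ) (n : ℕ) :
    ∃ c, 0 ≤ c ∧ ∀ xs t, 1 ≤ t → ‖dualDeriv T n xs t‖ ≤ c * lambdaNorm T β xs := by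
  obtain ⟨c, hc, hbound⟩ :
      ∃ c, 0 ≤ c ∧ ∀ t : ℝ, 1 ≤ t → ‖iteratedDerivWithin n T (Ioi 0) t‖ ≤ c := by
    rcases n.eq_zero_or_pos with rfl | hn
    · obtain ⟨M, hM⟩ := hT.bounded
      exact ⟨M, (norm_nonneg _).trans (hM 1 one_pos), fun t ht => by simpa using hM t (by linarith)⟩
    · obtain ⟨C, hC, hCn⟩ := hT.derivBound
      exact ⟨C ^ n, by positivity, fun t ht =>
        (hCn n hn t (by linarith)).trans (div_le_self (by positivity) (one_le_pow₀ ht))⟩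
  refine ⟨c, hc, fun xs t ht => ?_⟩
  calc ‖dualDeriv T n xs t‖ ≤ ‖xs‖ * ‖iteratedDerivWithin n T (Ioi 0) t‖ :=
        norm_dualDeriv_le hT.smooth xs n (by linarith)
    _ ≤ lambdaNorm T β xs * c := mul_le_mul norm_le_lambdaNorm (hbound t ht) (norm_nonneg _)
        ((norm_nonneg _).trans norm_le_lambdaNorm)
    _ = c * lambdaNorm T β xs := mul_comm _ _

theorem exists_norm_dualDeriv_le_rpow {β γ : ℝ} {k n : ℕ} (hkγ : k < γ) (hγk : γ < k + 1)
    (hγβ : γ < β) (hkn : k ≤ n) (hnm : n ≤ mExp β) :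
    ∃ C, 0 ≤ C ∧ ∀ xs, MemLambda T β xs → ∀ t ∈ Ioc (0 : ℝ) 1,
      ‖dualDeriv T n xs t‖ ≤ C * lambdaNorm T β xs * t ^ min (γ - n) 0 := by
  induction hnm using Nat.decreasingInduction with
  | self =>
    refine ⟨1, zero_le_one, fun xs hxs t ht => ?_⟩
    rw [min_eq_left (by linarith [lt_mExp β]), one_mul]
    exact (hxs.norm_dualDeriv_mExp_le ht.1).trans <| mul_le_mul_of_nonneg_left
      (Real.rpow_le_rpow_of_exponent_ge ht.1 ht.2 (by linarith))
      ((norm_nonneg _).trans norm_le_lambdaNorm)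
  | of_succ n _ ih =>
    obtain ⟨C, hC, hderiv⟩ := ih (by omega)
    obtain ⟨c, hc, hone⟩ := hT.exists_norm_dualDeriv_le_of_one_le β n
    have hkn' : (k : ℝ) ≤ n := by exact_mod_cast hkn
    have hγn : γ - n ≠ 0 := by
      rcases hkn.eq_or_lt with rfl | hlt
      · exact (sub_pos.2 hkγ).ne'
      · have : (k : ℝ) + 1 ≤ n := by exact_mod_cast hlt
        exact (by linarith : γ - n < 0).ne
    have hexp : min (γ - (n + 1)) 0 = γ - n - 1 := by
      rw [min_eq_left (by linarith)]; ring
    refine ⟨c + C / |γ - n|, by positivity, fun xs hxs t ht => ?_⟩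
    set L := lambdaNorm T β xs
    have hL : 0 ≤ L := (norm_nonneg xs).trans norm_le_lambdaNorm
    have hsub : Icc t 1 ⊆ Ioi 0 := fun u hu => ht.1.trans_le hu.1
    have hstep : ‖dualDeriv T n xs 1 - dualDeriv T n xs t‖
        ≤ C * L * ((1 - t ^ (γ - n)) / (γ - n)) := by
      simpa using norm_sub_le_of_norm_deriv_le_rpow hγn ht.1 ht.2
        (fun u hu => hasDerivAt_dualDeriv hT.smooth xs n (hsub hu))
        (((continuousOn_dualDeriv hT.smooth xs (n + 1)).mono
          (by rwa [uIcc_of_le ht.2])).intervalIntegrable)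
        (fun u hu => by simpa [hexp] using hderiv xs hxs u ⟨ht.1.trans hu.1, hu.2⟩)
    have htpow : 1 ≤ t ^ min (γ - n) 0 :=
      Real.one_le_rpow_of_pos_of_le_one_of_nonpos ht.1 ht.2 (min_le_right _ _)
    calc ‖dualDeriv T n xs t‖
        ≤ ‖dualDeriv T n xs 1‖ + ‖dualDeriv T n xs 1 - dualDeriv T n xs t‖ :=
          norm_le_norm_add_norm_sub _ _
      _ ≤ c * L * t ^ min (γ - n) 0 + C * L * (t ^ min (γ - n) 0 / |γ - n|) :=
          add_le_add ((hone xs 1 le_rfl).trans (le_mul_of_one_le_right (by positivity) htpow))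
            (hstep.trans (mul_le_mul_of_nonneg_left (one_sub_rpow_div_le hγn ht.1)
              (by positivity)))
      _ = (c + C / |γ - n|) * L * t ^ min (γ - n) 0 := by ring

theorem exists_norm_dualDeriv_le_lambdaNorm {β : ℝ} {k : ℕ} (hk : k < β) :
    ∃ C, ∀ xs, MemLambda T β xs → ∀ t, 0 < t → ‖dualDeriv T k xs t‖ ≤ C * lambdaNorm T β xs := by
  set γ : ℝ := (k + min β (k + 1)) / 2 with hγdef
  have hmin : (k : ℝ) < min β (k + 1) := lt_min hk (lt_add_one _)
  have hkγ : k < γ := by linarith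
  have hγk : γ < k + 1 := by linarith [min_le_right β ((k : ℝ) + 1)]
  have hγβ : γ < β := by linarith [min_le_left β ((k : ℝ) + 1)]
  have hkm : k ≤ mExp β := by exact_mod_cast (hk.trans (lt_mExp β)).le
  obtain ⟨C, -, hsmall⟩ :=
    hT.exists_norm_dualDeriv_le_rpow hkγ hγk hγβ le_rfl hkm
  obtain ⟨c, -, hlarge⟩ := hT.exists_norm_dualDeriv_le_of_one_le β k
  refine ⟨max C c, fun xs hxs t ht => ?_⟩
  have hL : 0 ≤ lambdaNorm T β xs := (norm_nonneg xs).trans norm_le_lambdaNorm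
  rcases le_or_gt t 1 with ht1 | ht1
  · have hbound := hsmall xs hxs t ⟨ht, ht1⟩
    rw [min_eq_right (by linarith), Real.rpow_zero, mul_one] at hbound
    exact hbound.trans (mul_le_mul_of_nonneg_right (le_max_left _ _) hL)
  · exact (hlarge xs t ht1.le).trans (mul_le_mul_of_nonneg_right (le_max_right _ _) hL)

theorem exists_norm_sub_comp_le_rpow {β : ℝ} (hβ : 0 < β) :
    ∃ γ : ℝ, 0 < γ ∧ ∃ K : ℝ, ∀ xs, MemLambda T β xs → ∀ t ∈ Ioc (0 : ℝ) 1,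
      ‖xs - xs.comp (T t)‖ ≤ K * lambdaNorm T β xs * t ^ γ := by
  set γ : ℝ := min β 1 / 2 with hγdef
  have hγ : 0 < γ := by positivity
  have hγ1 : γ < 1 := by linarith [min_le_right β 1]
  have hγβ : γ < β := by linarith [min_le_left β 1]
  obtain ⟨C, hC, hderiv⟩ := hT.exists_norm_dualDeriv_le_rpow (k := 0) (n := 1)
    (by simpa using hγ) (by simpa using hγ1) hγβ zero_le_one (by simp [mExp])
  have hexp : min (γ - 1) 0 = γ - 1 := min_eq_left (by linarith)
  refine ⟨γ, hγ, C / γ, fun xs hxs t ht => ?_⟩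
  have ht0 : 0 < t := ht.1
  set L := lambdaNorm T β xs
  have hL : 0 ≤ L := (norm_nonneg xs).trans norm_le_lambdaNorm
  have hdiff : ∀ s ∈ Ioc 0 t, ‖dualDeriv T 0 xs t - dualDeriv T 0 xs s‖ ≤ C / γ * L * t ^ γ := by
    intro s hs
    have hsub : Icc s t ⊆ Ioi 0 := fun u hu => hs.1.trans_le hu.1
    calc ‖dualDeriv T 0 xs t - dualDeriv T 0 xs s‖ ≤ C * L * ((t ^ γ - s ^ γ) / γ) :=
          norm_sub_le_of_norm_deriv_le_rpow hγ.ne' hs.1 hs.2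
            (fun u hu => hasDerivAt_dualDeriv hT.smooth xs 0 (hsub hu))
            (((continuousOn_dualDeriv hT.smooth xs 1).mono
              (by rwa [uIcc_of_le hs.2])).intervalIntegrable)
            (fun u hu => by
              simpa [hexp] using hderiv xs hxs u ⟨hs.1.trans hu.1, hu.2.trans ht.2⟩)
      _ ≤ C * L * (t ^ γ / γ) := by
          gcongr
          linarith [Real.rpow_pos_of_pos hs.1 γ]
      _ = C / γ * L * t ^ γ := by ring
  rw [norm_sub_rev]
  refine ContinuousLinearMap.opNorm_le_of_tendsto_apply (l := 𝓝[>] 0)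
    (φ := fun s => dualDeriv T 0 xs t - dualDeriv T 0 xs s) (by positivity) (fun x => ?_) ?_
  · simpa [dualDeriv] using tendsto_const_nhds.sub ((xs.continuous.tendsto x).comp (hT.strong x))
  · filter_upwards [Ioc_mem_nhdsGT ht.1] with s hs using hdiff s hs

theorem tendsto_norm_sub_comp {β : ℝ} (hβ : 0 < β) {xs : E →L[ℂ] ℂ} (hxs : MemLambda T β xs) :
    Tendsto (fun t : ℝ => ‖xs - xs.comp (T t)‖) (𝓝[>] 0) (𝓝 0) := by
  obtain ⟨γ, hγ, K, hK⟩ := hT.exists_norm_sub_comp_le_rpow hβ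
  have hlim : Tendsto (fun t : ℝ => K * lambdaNorm T β xs * t ^ γ) (𝓝[>] 0) (𝓝 0) := by
    simpa [Real.zero_rpow hγ.ne'] using
      ((Real.continuousAt_rpow_const 0 γ (Or.inr hγ.le)).tendsto.const_mul
        (K * lambdaNorm T β xs)).mono_left nhdsWithin_le_nhds
  exact squeeze_zero' (Eventually.of_forall fun t => norm_nonneg _)
    (by filter_upwards [Ioc_mem_nhdsGT one_pos] with t ht using hK xs hxs t ht) hlim

end IsHoloSG

/-- if `x* ∈ Λ_A^β` then (a) for every integer `0 ≤ k < β` one has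
`‖(d/dt)^k T_t* x*‖ ≤ C_k ‖x*‖_{Λ_A^β}` with `C_k` independent of `x*` and `t`,
and (b) `‖x* − T_t* x*‖ → 0` as `t → 0+`. -/
theorem stmt3 (T : ℝ → X →L[ℂ] X) (hT : IsHoloSG T) (β : ℝ) (hβ : 0 < β) :
    (∀ k : ℕ, (k : ℝ) < β → ∃ C : ℝ, ∀ xs : X →L[ℂ] ℂ, MemLambda T β xs →
      ∀ t : ℝ, 0 < t → ‖dualDeriv T k xs t‖ ≤ C * lambdaNorm T β xs) ∧
    (∀ xs : X →L[ℂ] ℂ, MemLambda T β xs →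
      Tendsto (fun t : ℝ => ‖xs - xs.comp (T t)‖) (𝓝[>] (0:ℝ)) (𝓝 0)) :=
  ⟨fun _ hk => hT.exists_norm_dualDeriv_le_lambdaNorm hk,
    fun _ hxs => hT.tendsto_norm_sub_comp hβ hxs⟩
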